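/- Let α > -1 and let I_α be the modified Bessel function of the first kind. Then for all z > 0, |I_α(z) - I_{α+1}(z)| < (4α+6) · I_{α+1}(z)/z. -/

import Mathlib

open Real

/-- The modified Bessel function of the first kind. -/
noncomputable def besselI (α : ℝ) (z : ℝ) : ℝ :=
  ∑' k : ℕ, (z / 2) ^ (α + 2 * (k : ℝ)) / ((k.factorial : ℝ) * Real.Gamma (α + (k : ℝ) + 1))

namespace BesselAux

/-- The k-th term of the Bessel series. -/
noncomputable def f (α z : ℝ) (k : ℕ) : ℝ :=
  (z / 2) ^ (α + 2 * (k : ℝ)) / ((k.factorial : ℝ) * Real.Gamma (α + (k : ℝ) + 1))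

lemma besselI_eq (α z : ℝ) : besselI α z = ∑' k, f α z k := rfl

lemma f_pos {α z : ℝ} (hα : -1 < α) (hz : 0 < z) (k : ℕ) : 0 < f α z k := by
  have ht : (0:ℝ) < z / 2 := by linarith
  have hk : (0:ℝ) ≤ (k:ℝ) := Nat.cast_nonneg k
  have hΓ : 0 < Real.Gamma (α + (k:ℝ) + 1) := Real.Gamma_pos_of_pos (by linarith)
  have hfac : (0:ℝ) < (k.factorial : ℝ) := by positivity
  exact div_pos (Real.rpow_pos_of_pos ht _) (mul_pos hfac hΓ)

lemma f_succ {α z : ℝ} (hα : -1 < α) (hz : 0 < z) (k : ℕ) :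
    f α z (k + 1) = f α z k * ((z / 2) ^ (2:ℝ) / (((k:ℝ) + 1) * (α + (k:ℝ) + 1))) := by
  have ht : (0:ℝ) < z / 2 := by linarith
  have hk : (0:ℝ) ≤ (k:ℝ) := Nat.cast_nonneg k
  have hne : α + (k:ℝ) + 1 ≠ 0 := ne_of_gt (by linarith)
  have hΓ : 0 < Real.Gamma (α + (k:ℝ) + 1) := Real.Gamma_pos_of_pos (by linarith)
  have hfac : (0:ℝ) < (k.factorial : ℝ) := by positivity
  unfold f
  rw [Nat.factorial_succ]
  push_cast
  rw [show α + 2 * ((k:ℝ) + 1) = (α + 2 * (k:ℝ)) + 2 by ring, Real.rpow_add ht,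
    show α + ((k:ℝ) + 1) + 1 = (α + (k:ℝ) + 1) + 1 by ring, Real.Gamma_add_one hne]
  field_simp

lemma f_summable {α z : ℝ} (hα : -1 < α) (hz : 0 < z) : Summable (f α z) := by
  have ht : (0:ℝ) < z / 2 := by linarith
  refine summable_of_ratio_norm_eventually_le (r := 1/2) (by norm_num) ?_
  have hev : ∀ k : ℕ, (⌈2 * (z/2) ^ (2:ℝ)⌉₊ + 1) ≤ k →
      ‖f α z (k + 1)‖ ≤ 1/2 * ‖f α z k‖ := by
    intro k hk
    have hfk := f_pos hα hz k
    have hfk1 := f_pos hα hz (k + 1)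
    have hkr : 2 * (z/2) ^ (2:ℝ) ≤ (k:ℝ) := by
      calc 2 * (z/2) ^ (2:ℝ) ≤ (⌈2 * (z/2) ^ (2:ℝ)⌉₊ : ℝ) := Nat.le_ceil _
        _ ≤ (k:ℝ) := by exact_mod_cast le_trans (Nat.le_succ _) hk
    have hk1 : (1:ℕ) ≤ k := le_trans (Nat.le_add_left 1 _) hk
    have hk1r : (1:ℝ) ≤ (k:ℝ) := by exact_mod_cast hk1
    rw [Real.norm_of_nonneg hfk1.le, Real.norm_of_nonneg hfk.le, f_succ hα hz k]
    have hq : (z/2) ^ (2:ℝ) / (((k:ℝ) + 1) * (α + (k:ℝ) + 1)) ≤ 1/2 := by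
      rw [div_le_iff₀ (by nlinarith)]
      nlinarith [Real.rpow_pos_of_pos ht (2:ℝ)]
    calc f α z k * ((z/2) ^ (2:ℝ) / (((k:ℝ) + 1) * (α + (k:ℝ) + 1)))
        ≤ f α z k * (1/2) := by
          exact mul_le_mul_of_nonneg_left hq hfk.le
      _ = 1/2 * f α z k := by ring
  exact Filter.eventually_atTop.2 ⟨_, hev⟩

lemma besselI_pos {α z : ℝ} (hα : -1 < α) (hz : 0 < z) : 0 < besselI α z := by
  rw [besselI_eq]
  exact Summable.tsum_pos (f_summable hα hz) (fun k => (f_pos hα hz k).le) 0 (f_pos hα hz 0)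

lemma key_term {α z : ℝ} (hα : -1 < α) (hz : 0 < z) (k : ℕ) :
    f α z (k + 1) - f (α + 2) z k = 2 * (α + 1) / z * f (α + 1) z (k + 1) := by
  have ht : (0:ℝ) < z / 2 := by linarith
  have hk : (0:ℝ) ≤ (k:ℝ) := Nat.cast_nonneg k
  have hne1 : α + (k:ℝ) + 1 ≠ 0 := ne_of_gt (by linarith)
  have hne2 : α + (k:ℝ) + 2 ≠ 0 := ne_of_gt (by linarith)
  have hΓ : 0 < Real.Gamma (α + (k:ℝ) + 2) := Real.Gamma_pos_of_pos (by linarith)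
  have hfac : (0:ℝ) < (k.factorial : ℝ) := by positivity
  unfold f
  rw [Nat.factorial_succ]
  push_cast
  rw [show α + 2 * ((k:ℝ) + 1) = (α + 2 * (k:ℝ) + 2) by ring,
    show α + 2 + 2 * (k:ℝ) = (α + 2 * (k:ℝ) + 2) by ring,
    show α + 1 + 2 * ((k:ℝ) + 1) = (α + 2 * (k:ℝ) + 2) + 1 by ring,
    show α + ((k:ℝ) + 1) + 1 = α + (k:ℝ) + 2 by ring,
    show α + 2 + (k:ℝ) + 1 = (α + (k:ℝ) + 2) + 1 by ring,
    show α + 1 + ((k:ℝ) + 1) + 1 = (α + (k:ℝ) + 2) + 1 by ring,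
    Real.Gamma_add_one hne2, Real.rpow_add_one (ne_of_gt ht)]
  have hT : (0:ℝ) < (z/2) ^ (α + 2 * (k:ℝ) + 2) := Real.rpow_pos_of_pos ht _
  field_simp
  ring

lemma key_zero {α z : ℝ} (hα : -1 < α) (hz : 0 < z) :
    f α z 0 = 2 * (α + 1) / z * f (α + 1) z 0 := by
  have ht : (0:ℝ) < z / 2 := by linarith
  have hne : α + 1 ≠ 0 := ne_of_gt (by linarith)
  have hΓ : 0 < Real.Gamma (α + 1) := Real.Gamma_pos_of_pos (by linarith)
  unfold f
  push_cast
  rw [show α + 1 + (0:ℝ) + 1 = (α + 1) + 1 by ring, Real.Gamma_add_one hne,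
    show α + 1 + 2 * (0:ℝ) = (α + 2 * (0:ℝ)) + 1 by ring,
    Real.rpow_add_one (ne_of_gt ht)]
  field_simp
  ring
  rw [add_comm]; exact mul_inv_cancel₀ hΓ.ne'

lemma recurrence {α z : ℝ} (hα : -1 < α) (hz : 0 < z) :
    besselI α z - besselI (α + 2) z = 2 * (α + 1) / z * besselI (α + 1) z := by
  have hα1 : -1 < α + 1 := by linarith
  have hα2 : -1 < α + 2 := by linarith
  have s0 := f_summable hα hz
  have s1 := f_summable hα1 hz
  have s2 := f_summable hα2 hz
  have s0' : Summable (fun k => f α z (k + 1)) := (summable_nat_add_iff 1).2 s0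
  have s1' : Summable (fun k => f (α + 1) z (k + 1)) := (summable_nat_add_iff 1).2 s1
  rw [besselI_eq, besselI_eq, besselI_eq, Summable.tsum_eq_zero_add s0, Summable.tsum_eq_zero_add s1]
  have h1 : (∑' k, f α z (k + 1)) - ∑' k, f (α + 2) z k
      = ∑' k, (f α z (k + 1) - f (α + 2) z k) := (Summable.tsum_sub s0' s2).symm
  have h2 : ∀ k : ℕ, f α z (k + 1) - f (α + 2) z k = 2 * (α + 1) / z * f (α + 1) z (k + 1) :=
    key_term hα hz
  have h3 : ∑' k, (f α z (k + 1) - f (α + 2) z k)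
      = 2 * (α + 1) / z * ∑' k, f (α + 1) z (k + 1) := by
    rw [tsum_congr h2, tsum_mul_left]
  have := key_zero hα hz
  calc f α z 0 + (∑' k, f α z (k + 1)) - ∑' k, f (α + 2) z k
      = f α z 0 + ((∑' k, f α z (k + 1)) - ∑' k, f (α + 2) z k) := by ring
    _ = 2 * (α + 1) / z * f (α + 1) z 0
        + 2 * (α + 1) / z * ∑' k, f (α + 1) z (k + 1) := by rw [h1, h3, this]
    _ = 2 * (α + 1) / z * (f (α + 1) z 0 + ∑' k, f (α + 1) z (k + 1)) := by ring

lemma f_step_le {β z : ℝ} (hβ : 0 ≤ β) (hz : 0 < z) (k : ℕ) :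
    f (β + 1) z k ≤ (f β z k + f β z (k + 1)) / 2 := by
  have hβ' : -1 < β := by linarith
  have ht : (0:ℝ) < z / 2 := by linarith
  have hk : (0:ℝ) ≤ (k:ℝ) := Nat.cast_nonneg k
  have hne : β + (k:ℝ) + 1 ≠ 0 := ne_of_gt (by linarith)
  have hΓ : 0 < Real.Gamma (β + (k:ℝ) + 1) := Real.Gamma_pos_of_pos (by linarith)
  have hfac : (0:ℝ) < (k.factorial : ℝ) := by positivity
  unfold f
  rw [Nat.factorial_succ]
  push_cast
  rw [show β + 1 + 2 * (k:ℝ) = (β + 2 * (k:ℝ)) + 1 by ring,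
    show β + 2 * ((k:ℝ) + 1) = (β + 2 * (k:ℝ)) + 1 + 1 by ring,
    show β + 1 + (k:ℝ) + 1 = (β + (k:ℝ) + 1) + 1 by ring,
    show β + ((k:ℝ) + 1) + 1 = (β + (k:ℝ) + 1) + 1 by ring,
    Real.Gamma_add_one hne, Real.rpow_add_one (ne_of_gt ht),
    Real.rpow_add_one (ne_of_gt ht), Real.rpow_add_one (ne_of_gt ht)]
  set T := (z/2) ^ (β + 2 * (k:ℝ)) with hT
  have hTpos : 0 < T := Real.rpow_pos_of_pos ht _
  set t := z / 2
  set c := β + (k:ℝ) + 1 with hc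
  set G := Real.Gamma c with hG
  set F := (k.factorial : ℝ) with hF
  have hcpos : 0 < c := by rw [hc]; linarith
  have hck : (k:ℝ) + 1 ≤ c := by rw [hc]; linarith
  have heq : (T / (F * G) + T * t * t / (((k:ℝ) + 1) * F * (c * G))) / 2
      - T * t / (F * (c * G)) = T * (((k:ℝ) + 1) * c + t * t - 2 * t * ((k:ℝ) + 1))
      / (F * G * (((k:ℝ) + 1) * c) * 2) := by
    field_simp
  have hnum : 0 ≤ ((k:ℝ) + 1) * c + t * t - 2 * t * ((k:ℝ) + 1) := by
    nlinarith [sq_nonneg ((k:ℝ) + 1 - t)]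
  have hrhs : 0 ≤ T * (((k:ℝ) + 1) * c + t * t - 2 * t * ((k:ℝ) + 1))
      / (F * G * (((k:ℝ) + 1) * c) * 2) := by positivity
  linarith [heq ▸ hrhs]

lemma besselI_succ_lt {β z : ℝ} (hβ : 0 ≤ β) (hz : 0 < z) :
    besselI (β + 1) z < besselI β z := by
  have hβ' : -1 < β := by linarith
  have hβ1 : -1 < β + 1 := by linarith
  have s0 := f_summable hβ' hz
  have s1 := f_summable hβ1 hz
  have s0' : Summable (fun k => f β z (k + 1)) := (summable_nat_add_iff 1).2 s0
  have hf0 := f_pos hβ' hz 0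
  have hle : besselI (β + 1) z ≤ ((∑' k, f β z k) + ∑' k, f β z (k + 1)) / 2 := by
    rw [besselI_eq]
    calc (∑' k, f (β + 1) z k) ≤ ∑' k, (f β z k + f β z (k + 1)) / 2 :=
        Summable.tsum_le_tsum (f_step_le hβ hz) s1 ((s0.add s0').div_const 2)
      _ = ((∑' k, f β z k) + ∑' k, f β z (k + 1)) / 2 := by
        rw [tsum_div_const, Summable.tsum_add s0 s0']
  have hshift : ∑' k, f β z (k + 1) = (∑' k, f β z k) - f β z 0 := by
    rw [Summable.tsum_eq_zero_add s0]; ring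
  rw [besselI_eq β]
  rw [hshift] at hle
  linarith

end BesselAux

open BesselAux in
theorem stmt8 (α : ℝ) (hα : -1 < α) (z : ℝ) (hz : 0 < z) :
    |besselI α z - besselI (α + 1) z| < (4 * α + 6) * besselI (α + 1) z / z := by
  have hα1 : -1 < α + 1 := by linarith
  have hα2 : -1 < α + 2 := by linarith
  set A := besselI α z
  set B := besselI (α + 1) z
  set C := besselI (α + 2) z
  set E := besselI (α + 3) z
  have hB : 0 < B := besselI_pos hα1 hz
  have hC : 0 < C := besselI_pos hα2 hz
  have hrec1 : A - C = 2 * (α + 1) / z * B := recurrence hα hz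
  have hrec2 : B - E = 2 * (α + 2) / z * C := by
    have h := recurrence hα1 hz
    have e1 : α + 1 + 2 = α + 3 := by ring
    have e2 : α + 1 + 1 = α + 2 := by ring
    rw [e1, e2] at h
    convert h using 3 <;> ring
  have hm1 : C < B := by
    have h := besselI_succ_lt (β := α + 1) (by linarith) hz
    rwa [show α + 1 + 1 = α + 2 by ring] at h
  have hm2 : E < C := by
    have h := besselI_succ_lt (β := α + 2) (by linarith) hz
    rwa [show α + 2 + 1 = α + 3 by ring] at h
  have hrec1' : (A - C) * z = 2 * (α + 1) * B := by
    rw [hrec1]; field_simp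
  have hrec2' : (B - E) * z = 2 * (α + 2) * C := by
    rw [hrec2]; field_simp
  rw [abs_lt]
  constructor
  · have h : -(A - B) < (4 * α + 6) * B / z := by
      rw [lt_div_iff₀ hz]
      nlinarith [mul_lt_mul_of_pos_right (sub_lt_sub_left hm2 B) hz,
        mul_lt_mul_of_pos_left hm1 (show (0:ℝ) < 2 * (α + 2) by linarith),
        mul_pos (show (0:ℝ) < 4 * α + 4 by linarith) hB]
    linarith
  · rw [lt_div_iff₀ hz]
    nlinarith [mul_pos (sub_pos.2 hm1) hz,
      mul_pos (show (0:ℝ) < 2 * α + 4 by linarith) hB]
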